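/- Let E and E' be real Hilbert spaces, X ⊆ E and Y ⊆ E' nonempty closed convex sets, and f : E × E' → ℝ a function that is μ-strongly-convex–strongly-concave on X × Y and whose saddle operator G(x,y) = (∇_x f(x,y), −∇_y f(x,y)) is ℓ-Lipschitz on X × Y, with 0 < μ ≤ ℓ. Let z* ∈ X × Y be a saddle point of f on X × Y, and set κ = ℓ/μ. Let δ ≥ 0 and let g̃ : E × E' → E × E' satisfy ‖g̃(z) − G(z)‖ ≤ δ for all z ∈ X × Y. Fix z₀ ∈ X × Y, set α = μ/(4ℓ²), and define the Inexact-GDA iterates z_{t+1} = Π_{X×Y}(z_t − α·g̃(z_t)) for t = 0, …, T−1. Then ‖z_T − z*‖² ≤ exp(−T/(8κ²))·‖z₀ − z*‖² + (1/ℓ² + 2/μ²)·δ². -/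

import Mathlib

/-!
The saddle operator `G` of a `μ`-strongly-convex–strongly-concave `f` is `μ`-strongly monotone,
and a saddle point `z*` solves the variational inequality `⟪G z*, w - z*⟫ ≥ 0` on `X × Y`, so
`z*` is the projection of `z* - α G z*`. Since the projection onto a convex set is nonexpansive,
`‖z_{t+1} - z*‖ ≤ ‖(z_t - z*) - α (G z_t - G z*)‖ + α δ`, and strong monotonicity together
with the Lipschitz bound contracts the first term by `1 - 2αμ + α²ℓ²`. Young's inequality then
gives `e_{t+1} ≤ (1 - c) e_t + c · 2δ²/μ²` for `e_t = ‖z_t - z*‖²` and `c = 5μ²/(16ℓ²)`, which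
unrolls to the claimed bound since `1 - c ≤ exp (-μ²/(8ℓ²))`.
-/

open RealInnerProductSpace

noncomputable section

variable {E E' : Type*} [NormedAddCommGroup E] [InnerProductSpace ℝ E] [CompleteSpace E]
  [NormedAddCommGroup E'] [InnerProductSpace ℝ E'] [CompleteSpace E']

/-- The saddle operator `G(x,y) = (∇ₓ f(x,y), −∇_y f(x,y))` on the Hilbert product
`WithLp 2 (E × E')`. -/
def saddleOp (f : E × E' → ℝ) (z : WithLp 2 (E × E')) : WithLp 2 (E × E') :=
  (WithLp.equiv 2 (E × E')).symm
    (gradient (fun u => f (u, (WithLp.equiv 2 (E × E') z).2)) (WithLp.equiv 2 (E × E') z).1,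
     -gradient (fun v => f ((WithLp.equiv 2 (E × E') z).1, v)) (WithLp.equiv 2 (E × E') z).2)

/-- `X × Y` as a subset of the Hilbert product. -/
def prodSet (X : Set E) (Y : Set E') : Set (WithLp 2 (E × E')) :=
  (WithLp.equiv 2 (E × E')) ⁻¹' (X ×ˢ Y)

/-- `p` is the metric projection of `v` onto `S`. -/
def IsProjOn {H : Type*} [NormedAddCommGroup H] (S : Set H) (v p : H) : Prop :=
  p ∈ S ∧ ∀ w ∈ S, ‖v - p‖ ≤ ‖v - w‖

theorem ConvexOn.add_fderiv_sub_le {F : Type*} [NormedAddCommGroup F] [NormedSpace ℝ F]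
    {s : Set F} {h : F → ℝ} {h' : F →L[ℝ] ℝ} {x y : F}
    (hh : ConvexOn ℝ s h) (hx : x ∈ s) (hy : y ∈ s) (hd : HasFDerivAt h h' x) :
    h x + h' (y - x) ≤ h y := by
  let γ : ℝ →ᵃ[ℝ] F := AffineMap.lineMap x y
  have hline : ConvexOn ℝ (Set.Icc 0 1) (h ∘ γ) :=
    (hh.comp_affineMap γ).subset (fun _ ht => hh.1.lineMap_mem hx hy ht) (convex_Icc 0 1)
  have hderiv : HasDerivAt (h ∘ γ) (h' (y - x)) 0 :=
    (AffineMap.lineMap_apply_zero (k := ℝ) x y ▸ hd).comp_hasDerivAt 0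
      AffineMap.hasDerivAt_lineMap
  have hslope := hline.le_slope_of_hasDerivAt (by simp) (by simp) zero_lt_one hderiv
  simp only [map_sub, slope_def_field, Function.comp_apply, AffineMap.lineMap_apply_one,
    AffineMap.lineMap_apply_zero, sub_zero, div_one, γ] at hslope
  linarith [map_sub h' y x]

theorem add_sq_le_one_add_mul_sq_add {a b β : ℝ} (hβ : 0 < β) :
    (a + b) ^ 2 ≤ (1 + β) * a ^ 2 + (1 + β⁻¹) * b ^ 2 := by
  have key : (1 + β) * a ^ 2 + (1 + β⁻¹) * b ^ 2 - (a + b) ^ 2 = (β * a - b) ^ 2 / β := by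
    field_simp; ring
  linarith [div_nonneg (sq_nonneg (β * a - b)) hβ.le]

theorem le_one_sub_pow_mul_add {e : ℕ → ℝ} {c D : ℝ} {T : ℕ} (hc : c ≤ 1) (hD : 0 ≤ D)
    (h : ∀ t < T, e (t + 1) ≤ (1 - c) * e t + c * D) :
    e T ≤ (1 - c) ^ T * e 0 + D := by
  induction T with
  | zero => simpa using hD
  | succ T ih =>
    calc e (T + 1) ≤ (1 - c) * e T + c * D := h T T.lt_succ_self
      _ ≤ (1 - c) * ((1 - c) ^ T * e 0 + D) + c * D := by
        gcongr
        exact ih fun t ht => h t (ht.trans T.lt_succ_self)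
      _ = (1 - c) ^ (T + 1) * e 0 + D := by ring

section InnerProductSpace

variable {H : Type*} [NormedAddCommGroup H] [InnerProductSpace ℝ H]

theorem StrongConvexOn.add_fderiv_sub_add_sq_le {s : Set H} {h : H → ℝ} {h' : H →L[ℝ] ℝ}
    {μ : ℝ} {x y : H} (hh : StrongConvexOn s μ h) (hx : x ∈ s) (hy : y ∈ s)
    (hd : HasFDerivAt h h' x) :
    h x + h' (y - x) + μ / 2 * ‖y - x‖ ^ 2 ≤ h y := by
  have key := (strongConvexOn_iff_convex.1 hh).add_fderiv_sub_le hx hy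
    (hd.sub ((hasStrictFDerivAt_norm_sq x).hasFDerivAt.const_mul (μ / 2)))
  simp only [sub_apply, smul_apply, coe_innerSL_apply, nsmul_eq_mul, Nat.cast_ofNat,
    smul_eq_mul] at key
  have hcross : ⟪x, y - x⟫ = ⟪y, x⟫ - ‖x‖ ^ 2 := by
    rw [inner_sub_right, real_inner_self_eq_norm_sq, real_inner_comm]
  rw [hcross] at key
  rw [norm_sub_sq_real]
  linarith

theorem IsProjOn.inner_sub_le_zero {S : Set H} {v p w : H} (hS : Convex ℝ S)
    (hp : IsProjOn S v p) (hw : w ∈ S) : ⟪v - p, w - p⟫ ≤ 0 := by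
  have : Nonempty S := ⟨⟨p, hp.1⟩⟩
  refine (norm_eq_iInf_iff_real_inner_le_zero hS hp.1).1 ?_ w hw
  exact le_antisymm (le_ciInf fun w => hp.2 w w.2)
    (ciInf_le (f := fun w : S => ‖v - w‖) ⟨0, by rintro _ ⟨w, rfl⟩; exact norm_nonneg _⟩
      ⟨p, hp.1⟩)

theorem norm_sub_le_of_inner_le_zero {v₁ v₂ p₁ p₂ : H} (h₁ : ⟪v₁ - p₁, p₂ - p₁⟫ ≤ 0)
    (h₂ : ⟪v₂ - p₂, p₁ - p₂⟫ ≤ 0) : ‖p₁ - p₂‖ ≤ ‖v₁ - v₂‖ := by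
  rw [← neg_sub p₁ p₂, inner_neg_right] at h₁
  have hsplit : ⟪v₁ - v₂, p₁ - p₂⟫
      = ‖p₁ - p₂‖ ^ 2 + ⟪v₁ - p₁, p₁ - p₂⟫ - ⟪v₂ - p₂, p₁ - p₂⟫ := by
    rw [← real_inner_self_eq_norm_sq, ← inner_add_left, ← inner_sub_left]
    congr 1; abel
  have hfirm : ‖p₁ - p₂‖ ^ 2 ≤ ‖v₁ - v₂‖ * ‖p₁ - p₂‖ := by
    linarith [real_inner_le_norm (v₁ - v₂) (p₁ - p₂)]
  nlinarith [norm_nonneg (p₁ - p₂), norm_nonneg (v₁ - v₂)]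

theorem norm_sub_smul_sq_le {d e : H} {μ ℓ α : ℝ} (hmono : μ * ‖d‖ ^ 2 ≤ ⟪e, d⟫)
    (hlip : ‖e‖ ≤ ℓ * ‖d‖) (hα : 0 ≤ α) :
    ‖d - α • e‖ ^ 2 ≤ (1 - 2 * α * μ + α ^ 2 * ℓ ^ 2) * ‖d‖ ^ 2 := by
  have hsq : ‖e‖ ^ 2 ≤ ℓ ^ 2 * ‖d‖ ^ 2 := by
    simpa [mul_pow] using pow_le_pow_left₀ (norm_nonneg e) hlip 2
  rw [norm_sub_sq_real, real_inner_smul_right, norm_smul, Real.norm_of_nonneg hα,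
    real_inner_comm]
  nlinarith [mul_le_mul_of_nonneg_left hmono hα, mul_le_mul_of_nonneg_left hsq (sq_nonneg α)]

theorem IsProjOn.norm_sub_le_of_inexact {S : Set H} {G : H → H} {z zs u p : H} {α δ : ℝ}
    (hS : Convex ℝ S) (hp : IsProjOn S (z - α • u) p) (hzs : zs ∈ S)
    (hvi : ∀ w ∈ S, 0 ≤ ⟪G zs, w - zs⟫) (hα : 0 ≤ α) (hu : ‖u - G z‖ ≤ δ) :
    ‖p - zs‖ ≤ ‖(z - zs) - α • (G z - G zs)‖ + α * δ := by
  -- `zs` is itself the projection of `zs - α • G zs` onto `S`.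
  have hzs_fixed : ⟪(zs - α • G zs) - zs, p - zs⟫ ≤ 0 := by
    rw [sub_sub_cancel_left, inner_neg_left, real_inner_smul_left, neg_nonpos]
    exact mul_nonneg hα (hvi p hp.1)
  calc ‖p - zs‖ ≤ ‖(z - α • u) - (zs - α • G zs)‖ :=
        norm_sub_le_of_inner_le_zero (hp.inner_sub_le_zero hS hzs) hzs_fixed
    _ = ‖((z - zs) - α • (G z - G zs)) - α • (u - G z)‖ := by congr 1; module
    _ ≤ ‖(z - zs) - α • (G z - G zs)‖ + ‖α • (u - G z)‖ := norm_sub_le _ _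
    _ ≤ ‖(z - zs) - α • (G z - G zs)‖ + α * δ := by
        rw [norm_smul, Real.norm_of_nonneg hα]; gcongr

theorem IsProjOn.norm_sub_sq_le_of_inexact {S : Set H} {G : H → H} {z zs u p : H}
    {μ ℓ α β δ : ℝ} (hS : Convex ℝ S) (hp : IsProjOn S (z - α • u) p) (hzs : zs ∈ S)
    (hmono : μ * ‖z - zs‖ ^ 2 ≤ ⟪G z - G zs, z - zs⟫) (hlip : ‖G z - G zs‖ ≤ ℓ * ‖z - zs‖)
    (hvi : ∀ w ∈ S, 0 ≤ ⟪G zs, w - zs⟫) (hα : 0 ≤ α) (hβ : 0 < β) (hu : ‖u - G z‖ ≤ δ) :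
    ‖p - zs‖ ^ 2 ≤ (1 + β) * (1 - 2 * α * μ + α ^ 2 * ℓ ^ 2) * ‖z - zs‖ ^ 2
      + (1 + β⁻¹) * (α * δ) ^ 2 := by
  calc ‖p - zs‖ ^ 2 ≤ (‖(z - zs) - α • (G z - G zs)‖ + α * δ) ^ 2 := by
        gcongr; exact hp.norm_sub_le_of_inexact hS hzs hvi hα hu
    _ ≤ (1 + β) * ‖(z - zs) - α • (G z - G zs)‖ ^ 2 + (1 + β⁻¹) * (α * δ) ^ 2 :=
        add_sq_le_one_add_mul_sq_add hβ
    _ ≤ _ := by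
        rw [mul_assoc]
        gcongr
        exact norm_sub_smul_sq_le hmono hlip hα

theorem inexact_projected_iteration_convergence {S : Set H} {G g : H → H} {zs : H}
    {μ ℓ δ α : ℝ} {T : ℕ} {z : ℕ → H} (hS : Convex ℝ S) (hμ : 0 < μ) (hμℓ : μ ≤ ℓ)
    (hzs : zs ∈ S) (hmono : ∀ w ∈ S, μ * ‖w - zs‖ ^ 2 ≤ ⟪G w - G zs, w - zs⟫)
    (hlip : ∀ w ∈ S, ‖G w - G zs‖ ≤ ℓ * ‖w - zs‖) (hvi : ∀ w ∈ S, 0 ≤ ⟪G zs, w - zs⟫)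
    (hg : ∀ w ∈ S, ‖g w - G w‖ ≤ δ) (hα : α = μ / (4 * ℓ ^ 2)) (hz0 : z 0 ∈ S)
    (hupd : ∀ t < T, IsProjOn S (z t - α • g (z t)) (z (t + 1))) :
    ‖z T - zs‖ ^ 2 ≤ Real.exp (-T * (μ / ℓ) ^ 2 / 8) * ‖z 0 - zs‖ ^ 2 + 2 / μ ^ 2 * δ ^ 2 := by
  have hℓ : 0 < ℓ := hμ.trans_le hμℓ
  set s := (μ / ℓ) ^ 2 with hs
  have hs₀ : 0 < s := by positivity
  have hs₁ : s ≤ 1 := pow_le_one₀ (by positivity) ((div_le_one hℓ).2 hμℓ)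
  have hα₀ : 0 ≤ α := by rw [hα]; positivity
  -- Young's inequality is used with `β = s / 8`.
  have hrate : (1 + s / 8) * (1 - 2 * α * μ + α ^ 2 * ℓ ^ 2) ≤ 1 - 5 * s / 16 := by
    have hlin : 2 * α * μ = s / 2 := by rw [hα, hs]; field_simp; ring
    have hquad : α ^ 2 * ℓ ^ 2 = s / 16 := by rw [hα, hs]; field_simp; ring
    rw [hlin, hquad]
    nlinarith
  have hnoise : (1 + (s / 8)⁻¹) * (α * δ) ^ 2 ≤ 5 * s / 16 * (2 / μ ^ 2 * δ ^ 2) := by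
    calc (1 + (s / 8)⁻¹) * (α * δ) ^ 2 = (s + 8) * s / (16 * μ ^ 2) * δ ^ 2 := by
          rw [hα, hs]; field_simp; ring
      _ ≤ 10 * s / (16 * μ ^ 2) * δ ^ 2 := by gcongr; linarith
      _ = 5 * s / 16 * (2 / μ ^ 2 * δ ^ 2) := by field_simp; ring
  have hmem : ∀ t ≤ T, z t ∈ S := by
    rintro (_ | t) ht
    exacts [hz0, (hupd t ht).1]
  have hstep : ∀ t < T, ‖z (t + 1) - zs‖ ^ 2
      ≤ (1 - 5 * s / 16) * ‖z t - zs‖ ^ 2 + 5 * s / 16 * (2 / μ ^ 2 * δ ^ 2) := by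
    intro t ht
    have hzt := hmem t ht.le
    refine ((hupd t ht).norm_sub_sq_le_of_inexact hS hzs (hmono _ hzt) (hlip _ hzt) hvi hα₀
      (by positivity : 0 < s / 8) (hg _ hzt)).trans ?_
    exact add_le_add (mul_le_mul_of_nonneg_right hrate (sq_nonneg _)) hnoise
  have hexp : (1 - 5 * s / 16) ^ T ≤ Real.exp (-T * s / 8) :=
    calc (1 - 5 * s / 16) ^ T ≤ Real.exp (-(5 * s / 16)) ^ T :=
          pow_le_pow_left₀ (by linarith) (Real.one_sub_le_exp_neg _) T
      _ = Real.exp (-T * (5 * s / 16)) := by rw [← Real.exp_nat_mul]; ring_nf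
      _ ≤ Real.exp (-T * s / 8) := by gcongr; nlinarith [T.cast_nonneg (α := ℝ)]
  calc ‖z T - zs‖ ^ 2 ≤ (1 - 5 * s / 16) ^ T * ‖z 0 - zs‖ ^ 2 + 2 / μ ^ 2 * δ ^ 2 :=
        le_one_sub_pow_mul_add (e := fun t => ‖z t - zs‖ ^ 2) (by linarith) (by positivity) hstep
    _ ≤ Real.exp (-T * s / 8) * ‖z 0 - zs‖ ^ 2 + 2 / μ ^ 2 * δ ^ 2 := by gcongr

end InnerProductSpace

section Saddle

theorem mem_prodSet {F F' : Type*} {X : Set F} {Y : Set F'} {w : WithLp 2 (F × F')} :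
    w ∈ prodSet X Y ↔ w.fst ∈ X ∧ w.snd ∈ Y :=
  Iff.rfl

theorem convex_prodSet {F F' : Type*} [AddCommGroup F] [Module ℝ F] [AddCommGroup F']
    [Module ℝ F'] {X : Set F} {Y : Set F'} (hX : Convex ℝ X) (hY : Convex ℝ Y) :
    Convex ℝ (prodSet X Y) :=
  (hX.prod hY).linear_preimage (WithLp.linearEquiv 2 ℝ (F × F')).toLinearMap

variable {X : Set E} {Y : Set E'}

theorem inner_saddleOp (f : E × E' → ℝ) (z w : WithLp 2 (E × E')) :
    ⟪saddleOp f z, w⟫ = fderiv ℝ (fun u => f (u, z.snd)) z.fst w.fst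
      - fderiv ℝ (fun v => f (z.fst, v)) z.snd w.snd := by
  simp [saddleOp, gradient, inner_neg_left, InnerProductSpace.toDual_symm_apply, sub_eq_add_neg]

theorem saddleOp_strongly_monotone {f : E × E' → ℝ} {μ : ℝ}
    (hdx : ∀ x ∈ X, ∀ y ∈ Y, DifferentiableAt ℝ (fun u => f (u, y)) x)
    (hdy : ∀ x ∈ X, ∀ y ∈ Y, DifferentiableAt ℝ (fun v => f (x, v)) y)
    (hscx : ∀ y ∈ Y, StrongConvexOn X μ fun x => f (x, y))
    (hscy : ∀ x ∈ X, StrongConvexOn Y μ fun y => -f (x, y))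
    {z₁ z₂ : WithLp 2 (E × E')} (hz₁ : z₁ ∈ prodSet X Y) (hz₂ : z₂ ∈ prodSet X Y) :
    μ * ‖z₁ - z₂‖ ^ 2 ≤ ⟪saddleOp f z₁ - saddleOp f z₂, z₁ - z₂⟫ := by
  obtain ⟨hx₁, hy₁⟩ := mem_prodSet.1 hz₁
  obtain ⟨hx₂, hy₂⟩ := mem_prodSet.1 hz₂
  have hA := (hscx _ hy₁).add_fderiv_sub_add_sq_le hx₁ hx₂ (hdx _ hx₁ _ hy₁).hasFDerivAt
  have hB := (hscx _ hy₂).add_fderiv_sub_add_sq_le hx₂ hx₁ (hdx _ hx₂ _ hy₂).hasFDerivAt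
  have hC := (hscy _ hx₁).add_fderiv_sub_add_sq_le hy₁ hy₂ (hdy _ hx₁ _ hy₁).hasFDerivAt.neg
  have hD := (hscy _ hx₂).add_fderiv_sub_add_sq_le hy₂ hy₁ (hdy _ hx₂ _ hy₂).hasFDerivAt.neg
  rw [norm_sub_rev] at hA hC
  rw [inner_sub_left, inner_saddleOp, inner_saddleOp, WithLp.prod_norm_sq_eq_of_L2]
  simp only [WithLp.sub_fst, WithLp.sub_snd, map_sub, neg_apply] at hA hB hC hD ⊢
  linarith

theorem inner_saddleOp_sub_nonneg {f : E × E' → ℝ} (hX : Convex ℝ X) (hY : Convex ℝ Y)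
    {zs w : WithLp 2 (E × E')} (hzs : zs ∈ prodSet X Y) (hw : w ∈ prodSet X Y)
    (hdx : DifferentiableAt ℝ (fun u => f (u, zs.snd)) zs.fst)
    (hdy : DifferentiableAt ℝ (fun v => f (zs.fst, v)) zs.snd)
    (hmin : IsMinOn (fun u => f (u, zs.snd)) X zs.fst)
    (hmax : IsMaxOn (fun v => f (zs.fst, v)) Y zs.snd) :
    0 ≤ ⟪saddleOp f zs, w - zs⟫ := by
  obtain ⟨hxs, hys⟩ := mem_prodSet.1 hzs
  obtain ⟨hxw, hyw⟩ := mem_prodSet.1 hw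
  have hx := hmin.localize.hasFDerivWithinAt_nonneg hdx.hasFDerivAt.hasFDerivWithinAt
    (sub_mem_posTangentConeAt_of_segment_subset (hX.segment_subset hxs hxw))
  have hy := hmax.localize.hasFDerivWithinAt_nonpos hdy.hasFDerivAt.hasFDerivWithinAt
    (sub_mem_posTangentConeAt_of_segment_subset (hY.segment_subset hys hyw))
  rw [inner_saddleOp, WithLp.sub_fst, WithLp.sub_snd]
  linarith

end Saddle

theorem inexact_gda_scsc_convergence_general
    (X : Set E) (Y : Set E') (hXcv : Convex ℝ X) (hYcv : Convex ℝ Y)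
    (f : E × E' → ℝ) (μ ℓ : ℝ) (hμ : 0 < μ) (hμℓ : μ ≤ ℓ)
    (hdx : ∀ x ∈ X, ∀ y ∈ Y, DifferentiableAt ℝ (fun u => f (u, y)) x)
    (hdy : ∀ x ∈ X, ∀ y ∈ Y, DifferentiableAt ℝ (fun v => f (x, v)) y)
    (hscx : ∀ y ∈ Y, ConvexOn ℝ X (fun x => f (x, y) - μ / 2 * ‖x‖ ^ 2))
    (hscy : ∀ x ∈ X, ConvexOn ℝ Y (fun y => -f (x, y) - μ / 2 * ‖y‖ ^ 2))
    (hlip : ∀ z₁ ∈ prodSet X Y, ∀ z₂ ∈ prodSet X Y,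
      ‖saddleOp f z₁ - saddleOp f z₂‖ ≤ ℓ * ‖z₁ - z₂‖)
    (zs : WithLp 2 (E × E')) (hzsS : zs ∈ prodSet X Y)
    (hsaddle : ∀ x ∈ X, ∀ y ∈ Y,
      f ((WithLp.equiv 2 (E × E') zs).1, y) ≤ f (WithLp.equiv 2 (E × E') zs) ∧
      f (WithLp.equiv 2 (E × E') zs) ≤ f (x, (WithLp.equiv 2 (E × E') zs).2))
    (κ : ℝ) (hκ : κ = ℓ / μ)
    (δ : ℝ)
    (gt : WithLp 2 (E × E') → WithLp 2 (E × E'))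
    (hgt : ∀ z ∈ prodSet X Y, ‖gt z - saddleOp f z‖ ≤ δ)
    (α : ℝ) (hα : α = μ / (4 * ℓ ^ 2))
    (T : ℕ) (z : ℕ → WithLp 2 (E × E')) (hz0 : z 0 ∈ prodSet X Y)
    (hupd : ∀ t < T, IsProjOn (prodSet X Y) (z t - α • gt (z t)) (z (t + 1))) :
    ‖z T - zs‖ ^ 2 ≤
      Real.exp (-(T : ℝ) / (8 * κ ^ 2)) * ‖z 0 - zs‖ ^ 2 +
        (1 / ℓ ^ 2 + 2 / μ ^ 2) * δ ^ 2 := by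
  obtain ⟨hxs, hys⟩ := mem_prodSet.1 hzsS
  have hmono : ∀ w ∈ prodSet X Y, μ * ‖w - zs‖ ^ 2 ≤ ⟪saddleOp f w - saddleOp f zs, w - zs⟫ :=
    fun w hw => saddleOp_strongly_monotone hdx hdy
      (fun y hy => strongConvexOn_iff_convex.2 (hscx y hy))
      (fun x hx => strongConvexOn_iff_convex.2 (hscy x hx)) hw hzsS
  have hvi : ∀ w ∈ prodSet X Y, 0 ≤ ⟪saddleOp f zs, w - zs⟫ :=
    fun w hw => inner_saddleOp_sub_nonneg hXcv hYcv hzsS hw (hdx _ hxs _ hys) (hdy _ hxs _ hys)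
      (fun u hu => (hsaddle u hu _ hys).2) (fun v hv => (hsaddle _ hxs v hv).1)
  have hS : Convex ℝ (prodSet X Y) := convex_prodSet hXcv hYcv
  have hconv := inexact_projected_iteration_convergence hS hμ hμℓ hzsS hmono
    (fun w hw => hlip w hw zs hzsS) hvi hgt hα hz0 hupd
  have hexponent : -(T : ℝ) / (8 * κ ^ 2) = -T * (μ / ℓ) ^ 2 / 8 := by
    rw [hκ]; field_simp
  rw [hexponent]
  refine hconv.trans ?_
  gcongr
  exact le_add_of_nonneg_left (by positivity)

/-- Lemma C.1: Inexact-GDA for strongly-convex–strongly-concave problems.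
With `κ = ℓ/μ`, stepsize `α = μ/(4ℓ²)` and a `δ`-inexact gradient oracle `g̃`, the GDA
iterates `z_{t+1} = Π_{X×Y}(z_t − α g̃(z_t))` satisfy
`‖z_T − z*‖² ≤ exp(−T/(8κ²))·‖z₀ − z*‖² + (1/ℓ² + 2/μ²)·δ²`. -/
theorem inexact_gda_scsc_convergence
    (X : Set E) (Y : Set E') (hXne : X.Nonempty) (hYne : Y.Nonempty)
    (hXcl : IsClosed X) (hYcl : IsClosed Y) (hXcv : Convex ℝ X) (hYcv : Convex ℝ Y)
    (f : E × E' → ℝ) (μ ℓ : ℝ) (hμ : 0 < μ) (hμℓ : μ ≤ ℓ)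
    (hdx : ∀ x ∈ X, ∀ y ∈ Y, DifferentiableAt ℝ (fun u => f (u, y)) x)
    (hdy : ∀ x ∈ X, ∀ y ∈ Y, DifferentiableAt ℝ (fun v => f (x, v)) y)
    (hscx : ∀ y ∈ Y, ConvexOn ℝ X (fun x => f (x, y) - μ / 2 * ‖x‖ ^ 2))
    (hscy : ∀ x ∈ X, ConvexOn ℝ Y (fun y => -f (x, y) - μ / 2 * ‖y‖ ^ 2))
    (hlip : ∀ z₁ ∈ prodSet X Y, ∀ z₂ ∈ prodSet X Y,
      ‖saddleOp f z₁ - saddleOp f z₂‖ ≤ ℓ * ‖z₁ - z₂‖)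
    (zs : WithLp 2 (E × E')) (hzsS : zs ∈ prodSet X Y)
    (hsaddle : ∀ x ∈ X, ∀ y ∈ Y,
      f ((WithLp.equiv 2 (E × E') zs).1, y) ≤ f (WithLp.equiv 2 (E × E') zs) ∧
      f (WithLp.equiv 2 (E × E') zs) ≤ f (x, (WithLp.equiv 2 (E × E') zs).2))
    (κ : ℝ) (hκ : κ = ℓ / μ)
    (δ : ℝ) (hδ : 0 ≤ δ)
    (gt : WithLp 2 (E × E') → WithLp 2 (E × E'))
    (hgt : ∀ z ∈ prodSet X Y, ‖gt z - saddleOp f z‖ ≤ δ)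
    (α : ℝ) (hα : α = μ / (4 * ℓ ^ 2))
    (T : ℕ) (z : ℕ → WithLp 2 (E × E')) (hz0 : z 0 ∈ prodSet X Y)
    (hupd : ∀ t < T, IsProjOn (prodSet X Y) (z t - α • gt (z t)) (z (t + 1))) :
    ‖z T - zs‖ ^ 2 ≤
      Real.exp (-(T : ℝ) / (8 * κ ^ 2)) * ‖z 0 - zs‖ ^ 2 +
        (1 / ℓ ^ 2 + 2 / μ ^ 2) * δ ^ 2 :=
  inexact_gda_scsc_convergence_general X Y hXcv hYcv f μ ℓ hμ hμℓ hdx hdy hscx hscy hlip zs hzsS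
    hsaddle κ hκ δ gt hgt α hα T z hz0 hupd
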